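/- Summing over the seven base-chord types ∘7, maj7♯5, −maj7, maj7, 7, −7, −7♭5 (rooted at pitch class 0 in ZMod 12), the total number of special modes — admissible modal scales that are not standard modes — is exactly 12 (namely 0 + 0 + 0 + 1 + 4 + 3 + 4). -/

import Mathlib

/-! Admissible modal scales (rooted at pitch class 0 in `ZMod 12`) over each of the
seven base-chord types, obtained by inserting a second, fourth and sixth degree out
of the allowed choices, together with the 21 standard modes grouped by base-chord. -/

/-- ∘7 = {0,3,6,9}, degrees (1, 5, 8). -/
def admDim7 : Finset (Finset (ZMod 12)) :=
  {({0, 1, 3, 5, 6, 8, 9} : Finset (ZMod 12))}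

/-- maj7♯5 = {0,4,8,11}, degrees (2, {5,6}, 9). -/
def admMaj7s5 : Finset (Finset (ZMod 12)) :=
  ({5, 6} : Finset (ZMod 12)).image fun s3 =>
    ({0, 2, 4, s3, 8, 9, 11} : Finset (ZMod 12))

/-- −maj7 = {0,3,7,11}, degrees (2, 5, {8,9}). -/
def admMinMaj7 : Finset (Finset (ZMod 12)) :=
  ({8, 9} : Finset (ZMod 12)).image fun s5 =>
    ({0, 2, 3, 5, 7, s5, 11} : Finset (ZMod 12))

/-- maj7 = {0,4,7,11}, degrees ({2,3}, {5,6}, 9). -/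
def admMaj7 : Finset (Finset (ZMod 12)) :=
  ({2, 3} : Finset (ZMod 12)).biUnion fun s1 =>
    ({5, 6} : Finset (ZMod 12)).image fun s3 =>
      ({0, s1, 4, s3, 7, 9, 11} : Finset (ZMod 12))

/-- 7 = {0,4,7,10}, degrees ({1,2}, {5,6}, {8,9}). -/
def admDom7 : Finset (Finset (ZMod 12)) :=
  ({1, 2} : Finset (ZMod 12)).biUnion fun s1 =>
    ({5, 6} : Finset (ZMod 12)).biUnion fun s3 =>
      ({8, 9} : Finset (ZMod 12)).image fun s5 =>
        ({0, s1, 4, s3, 7, s5, 10} : Finset (ZMod 12))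

/-- −7 = {0,3,7,10}, degrees ({1,2}, {5,6}, {8,9}). -/
def admMin7 : Finset (Finset (ZMod 12)) :=
  ({1, 2} : Finset (ZMod 12)).biUnion fun s1 =>
    ({5, 6} : Finset (ZMod 12)).biUnion fun s3 =>
      ({8, 9} : Finset (ZMod 12)).image fun s5 =>
        ({0, s1, 3, s3, 7, s5, 10} : Finset (ZMod 12))

/-- −7♭5 = {0,3,6,10}, degrees ({1,2}, {4,5}, {8,9}). -/
def admHalfDim : Finset (Finset (ZMod 12)) :=
  ({1, 2} : Finset (ZMod 12)).biUnion fun s1 =>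
    ({4, 5} : Finset (ZMod 12)).biUnion fun s3 =>
      ({8, 9} : Finset (ZMod 12)).image fun s5 =>
        ({0, s1, 3, s3, 6, s5, 10} : Finset (ZMod 12))

/-- Standard mode over ∘7: Ultralocrian. -/
def stdDim7 : Finset (Finset (ZMod 12)) :=
  {({0, 1, 3, 5, 6, 8, 9} : Finset (ZMod 12))}

/-- Standard modes over maj7♯5: Lydian augmented, Ionian augmented. -/
def stdMaj7s5 : Finset (Finset (ZMod 12)) :=
  { ({0, 2, 4, 6, 8, 9, 11} : Finset (ZMod 12)),
    ({0, 2, 4, 5, 8, 9, 11} : Finset (ZMod 12)) }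

/-- Standard modes over −maj7: Hypoionian, Hypoionian ♭6. -/
def stdMinMaj7 : Finset (Finset (ZMod 12)) :=
  { ({0, 2, 3, 5, 7, 9, 11} : Finset (ZMod 12)),
    ({0, 2, 3, 5, 7, 8, 11} : Finset (ZMod 12)) }

/-- Standard modes over maj7: Ionian, Lydian, Lydian ♯2. -/
def stdMaj7 : Finset (Finset (ZMod 12)) :=
  { ({0, 2, 4, 5, 7, 9, 11} : Finset (ZMod 12)),
    ({0, 2, 4, 6, 7, 9, 11} : Finset (ZMod 12)),
    ({0, 3, 4, 6, 7, 9, 11} : Finset (ZMod 12)) }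

/-- Standard modes over 7: Mixolydian, Mixolydian ♭13, Phrygian dominant,
Lydian dominant. -/
def stdDom7 : Finset (Finset (ZMod 12)) :=
  { ({0, 2, 4, 5, 7, 9, 10} : Finset (ZMod 12)),
    ({0, 2, 4, 5, 7, 8, 10} : Finset (ZMod 12)),
    ({0, 1, 4, 5, 7, 8, 10} : Finset (ZMod 12)),
    ({0, 2, 4, 6, 7, 9, 10} : Finset (ZMod 12)) }

/-- Standard modes over −7: Dorian, Phrygian, Eolian, Dorian ♭2, Dorian ♯4. -/
def stdMin7 : Finset (Finset (ZMod 12)) :=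
  { ({0, 2, 3, 5, 7, 9, 10} : Finset (ZMod 12)),
    ({0, 1, 3, 5, 7, 8, 10} : Finset (ZMod 12)),
    ({0, 2, 3, 5, 7, 8, 10} : Finset (ZMod 12)),
    ({0, 1, 3, 5, 7, 9, 10} : Finset (ZMod 12)),
    ({0, 2, 3, 6, 7, 9, 10} : Finset (ZMod 12)) }

/-- Standard modes over −7♭5: Locrian, Locrian ♯2, Superlocrian, Locrian ♯6. -/
def stdHalfDim : Finset (Finset (ZMod 12)) :=
  { ({0, 1, 3, 5, 6, 8, 10} : Finset (ZMod 12)),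
    ({0, 2, 3, 5, 6, 8, 10} : Finset (ZMod 12)),
    ({0, 1, 3, 4, 6, 8, 10} : Finset (ZMod 12)),
    ({0, 1, 3, 5, 6, 9, 10} : Finset (ZMod 12)) }

theorem admDim7_sdiff_stdDim7 : admDim7 \ stdDim7 = ∅ := by decide

theorem admMaj7s5_sdiff_stdMaj7s5 : admMaj7s5 \ stdMaj7s5 = ∅ := by decide

theorem admMinMaj7_sdiff_stdMinMaj7 : admMinMaj7 \ stdMinMaj7 = ∅ := by decide

theorem admMaj7_sdiff_stdMaj7 :
    admMaj7 \ stdMaj7 = {({0, 3, 4, 5, 7, 9, 11} : Finset (ZMod 12))} := by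
  decide

theorem admDom7_sdiff_stdDom7 :
    admDom7 \ stdDom7 =
      { ({0, 1, 4, 5, 7, 9, 10} : Finset (ZMod 12)),
        ({0, 1, 4, 6, 7, 8, 10} : Finset (ZMod 12)),
        ({0, 1, 4, 6, 7, 9, 10} : Finset (ZMod 12)),
        ({0, 2, 4, 6, 7, 8, 10} : Finset (ZMod 12)) } := by
  decide

theorem admMin7_sdiff_stdMin7 :
    admMin7 \ stdMin7 =
      { ({0, 1, 3, 6, 7, 8, 10} : Finset (ZMod 12)),
        ({0, 1, 3, 6, 7, 9, 10} : Finset (ZMod 12)),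
        ({0, 2, 3, 6, 7, 8, 10} : Finset (ZMod 12)) } := by
  decide

theorem admHalfDim_sdiff_stdHalfDim :
    admHalfDim \ stdHalfDim =
      { ({0, 1, 3, 4, 6, 9, 10} : Finset (ZMod 12)),
        ({0, 2, 3, 4, 6, 8, 10} : Finset (ZMod 12)),
        ({0, 2, 3, 4, 6, 9, 10} : Finset (ZMod 12)),
        ({0, 2, 3, 5, 6, 9, 10} : Finset (ZMod 12)) } := by
  decide

/-- Summing over the seven base-chord types ∘7, maj7♯5, −maj7, maj7, 7, −7, −7♭5,
the numbers of special modes (admissible scales that are not standard modes) are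
respectively 0, 0, 0, 1, 4, 3, 4, for a total of exactly 12. -/
theorem total_special_modes_eq_twelve :
    (admDim7.filter fun S => S ∉ stdDim7).card = 0 ∧
    (admMaj7s5.filter fun S => S ∉ stdMaj7s5).card = 0 ∧
    (admMinMaj7.filter fun S => S ∉ stdMinMaj7).card = 0 ∧
    (admMaj7.filter fun S => S ∉ stdMaj7).card = 1 ∧
    (admDom7.filter fun S => S ∉ stdDom7).card = 4 ∧
    (admMin7.filter fun S => S ∉ stdMin7).card = 3 ∧
    (admHalfDim.filter fun S => S ∉ stdHalfDim).card = 4 ∧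
    (admDim7.filter fun S => S ∉ stdDim7).card +
      (admMaj7s5.filter fun S => S ∉ stdMaj7s5).card +
      (admMinMaj7.filter fun S => S ∉ stdMinMaj7).card +
      (admMaj7.filter fun S => S ∉ stdMaj7).card +
      (admDom7.filter fun S => S ∉ stdDom7).card +
      (admMin7.filter fun S => S ∉ stdMin7).card +
      (admHalfDim.filter fun S => S ∉ stdHalfDim).card = 12 := by
  simp only [Finset.filter_notMem_eq_sdiff, admDim7_sdiff_stdDim7, admMaj7s5_sdiff_stdMaj7s5,
    admMinMaj7_sdiff_stdMinMaj7, admMaj7_sdiff_stdMaj7, admDom7_sdiff_stdDom7,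
    admMin7_sdiff_stdMin7, admHalfDim_sdiff_stdHalfDim]
  decide
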